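/- arXiv:1703.04287 — 2 statements merged into one kernel-verified Lean document; each statement's English description precedes it below -/
import Mathlib

section
/- limsup_{n→∞} κ₂(n)/n^{log₂(1+√2)} = (2+√2)/4. -/
/-!
Write `a n = κ₂(n)` and `b n` for the first column of the binary digit product (`kap 2 n` and
`kapB 2 n`); appending the binary digit `i` acts by `(a, b) ↦ ((i + 1) a + b, a)`. Let
`α = log₂ (1 + √2)`. The form `a + (√2 - 1) b` is multiplied by exactly `1 + √2 = 2 ^ α` under
the digit `1`, so it equals `(1 + √2) ^ m` at `n = 2 ^ m - 1`, which forces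
`a n ≥ (2 + √2)/4 · (1 + √2) ^ m - √2/4` there. Conversely, the three linear inequalities of
`KapBound` between `a`, `b` and `N = (n + 1) ^ α` survive both digit steps (`N` grows by the
factor `1 + √2` under an odd step and by at least `47/25` under an even one), and the second of
them gives `a n ≤ (2 + √2)/4 · ((n + 1) ^ α + 1)`.
-/

open Matrix

/-- The matrix `A_i = [[i+1,1],[1,0]]`. -/
def A (i : ℕ) : Matrix (Fin 2) (Fin 2) ℤ := !![(i : ℤ) + 1, 1; 1, 0]

/-- `κ(n) = [1,0]·A_{i₀}·A_{i₁}···A_{i_s}·[1,0]^T` where `i_s⋯i₁i₀` is the base-`k`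
expansion of `n` (`Nat.digits k n = [i₀, i₁, …, i_s]`), i.e. the `(0,0)` entry of the
product of the `A_i` taken with digits in order of increasing significance. -/
def kap (k n : ℕ) : ℤ :=
  ((Nat.digits k n).foldr (fun i M => A i * M) (1 : Matrix (Fin 2) (Fin 2) ℤ)) 0 0

open Filter Topology

lemma le_rpow_of_pow_le_pow {x q β : ℝ} {m n : ℕ} (hx : 1 ≤ x) (hq : 0 ≤ q) (hn : n ≠ 0)
    (hβ : (m / n : ℝ) ≤ β) (h : q ^ n ≤ x ^ m) : q ≤ x ^ β :=
  calc q = (q ^ n) ^ (n⁻¹ : ℝ) := (Real.pow_rpow_inv_natCast hq hn).symm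
    _ ≤ (x ^ m) ^ (n⁻¹ : ℝ) := by gcongr
    _ = x ^ (m / n : ℝ) := by
      rw [← Real.rpow_natCast, ← Real.rpow_mul (by linarith), div_eq_mul_inv]
    _ ≤ x ^ β := Real.rpow_le_rpow_of_exponent_le hx hβ

theorem limsup_eq_of_eventually_le_of_tendsto_comp {ι κ R : Type*}
    [ConditionallyCompleteLinearOrder R] [TopologicalSpace R] [OrderTopology R]
    {l : Filter ι} {l' : Filter κ} [l'.NeBot] {f g : ι → R} {φ : κ → ι} {c : R}
    (hf : IsCoboundedUnder (· ≤ ·) l f) (hfg : f ≤ᶠ[l] g) (hg : Tendsto g l (𝓝 c))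
    (hφ : Tendsto φ l' l) (hfφ : Tendsto (f ∘ φ) l' (𝓝 c)) : limsup f l = c := by
  have : l.NeBot := hφ.neBot
  refine le_antisymm ?_ ?_
  · exact (limsup_le_limsup hfg hf hg.isBoundedUnder_le).trans_eq hg.limsup_eq
  · exact (hfφ.mapClusterPt.of_comp hφ).le_limsup (hg.isBoundedUnder_le.mono_le hfg)

lemma two_pow_succ_sub_one (m : ℕ) : 2 ^ (m + 1) - 1 = 1 + 2 * (2 ^ m - 1) := by
  have := Nat.one_le_two_pow (n := m); omega

lemma cast_two_pow_sub_one_add_one (m : ℕ) : ((2 ^ m - 1 : ℕ) : ℝ) + 1 = 2 ^ m := by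
  push_cast [Nat.cast_sub (Nat.one_le_two_pow (n := m))]
  ring

lemma tendsto_two_pow_sub_one : Tendsto (fun m : ℕ => 2 ^ m - 1) atTop atTop :=
  (tendsto_sub_atTop_nat 1).comp (tendsto_pow_atTop_atTop_of_one_lt one_lt_two)

lemma sqrt_two_bounds : 1.4142 ≤ √2 ∧ √2 ≤ 1.41422 :=
  ⟨(Real.le_sqrt (by norm_num) (by norm_num)).2 (by norm_num),
    (Real.sqrt_le_left (by norm_num)).2 (by norm_num)⟩

def kapB (k n : ℕ) : ℤ := ((Nat.digits k n).map A).prod 1 0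

lemma kap_eq_prod (k n : ℕ) : kap k n = ((Nat.digits k n).map A).prod 0 0 := by
  simp only [kap, List.prod_eq_foldr, List.foldr_map]

lemma A_mul_apply_zero_zero (i : ℕ) (M : Matrix (Fin 2) (Fin 2) ℤ) :
    (A i * M) 0 0 = (i + 1) * M 0 0 + M 1 0 := by
  simp [A, Matrix.mul_apply, Fin.sum_univ_two]

lemma A_mul_apply_one_zero (i : ℕ) (M : Matrix (Fin 2) (Fin 2) ℤ) : (A i * M) 1 0 = M 0 0 := by
  simp [A, Matrix.mul_apply, Fin.sum_univ_two]

lemma prod_map_A_pos (l : List ℕ) : 0 < (l.map A).prod 0 0 ∧ 0 ≤ (l.map A).prod 1 0 := by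
  induction l with
  | nil => simp
  | cons i l ih =>
    simp only [List.map_cons, List.prod_cons, A_mul_apply_zero_zero, A_mul_apply_one_zero]
    obtain ⟨h0, h1⟩ := ih
    exact ⟨by nlinarith, h0.le⟩

section Digits

variable {k i n : ℕ}

lemma kap_add_mul (hk : 1 < k) (hi : i < k) (h : i ≠ 0 ∨ n ≠ 0) :
    kap k (i + k * n) = (i + 1) * kap k n + kapB k n := by
  rw [kap_eq_prod, kap_eq_prod, kapB, Nat.digits_add k hk i n hi h, List.map_cons, List.prod_cons,
    A_mul_apply_zero_zero]

lemma kapB_add_mul (hk : 1 < k) (hi : i < k) (h : i ≠ 0 ∨ n ≠ 0) :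
    kapB k (i + k * n) = kap k n := by
  rw [kap_eq_prod, kapB, Nat.digits_add k hk i n hi h, List.map_cons, List.prod_cons,
    A_mul_apply_one_zero]

end Digits

lemma kap_pos (k n : ℕ) : 0 < kap k n := by
  rw [kap_eq_prod]; exact (prod_map_A_pos _).1

local notation "α" => Real.logb 2 (1 + √2)

lemma two_rpow_alpha : (2 : ℝ) ^ α = 1 + √2 :=
  Real.rpow_logb (by norm_num) (by norm_num) (by positivity)

lemma five_div_four_le_alpha : (5 / 4 : ℝ) ≤ α := by
  have hs2 : √2 ^ 2 = 2 := Real.sq_sqrt (by norm_num)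
  have hsl := sqrt_two_bounds.1
  have h : (5 : ℝ) ≤ Real.logb 2 ((1 + √2) ^ 4) := by
    rw [Real.le_logb_iff_rpow_le (by norm_num) (by positivity)]
    norm_num
    nlinarith
  rw [Real.logb_pow] at h
  push_cast at h
  linarith

lemma alpha_pos : 0 < α := lt_of_lt_of_le (by norm_num) five_div_four_le_alpha

lemma le_rpow_alpha {x q : ℝ} (hx : 1 ≤ x) (hq : 0 ≤ q) (h : q ^ 4 ≤ x ^ 5) : q ≤ x ^ α :=
  le_rpow_of_pow_le_pow hx hq four_ne_zero (by norm_num [five_div_four_le_alpha]) h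

lemma two_mul_rpow_alpha {x : ℝ} (hx : 0 ≤ x) : (2 * x) ^ α = (1 + √2) * x ^ α := by
  rw [Real.mul_rpow (by norm_num) hx, two_rpow_alpha]

lemma two_pow_rpow_alpha (m : ℕ) : ((2 : ℝ) ^ m) ^ α = (1 + √2) ^ m := by
  rw [← Real.rpow_pow_comm (by norm_num), two_rpow_alpha]

lemma add_one_rpow_alpha_of_three_le {k : ℕ} (hk : 3 ≤ k) : (1 + √2) ^ 2 ≤ ((k : ℝ) + 1) ^ α := by
  rw [← two_pow_rpow_alpha]
  gcongr
  · exact alpha_pos.le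
  · norm_num; exact_mod_cast (by omega : 4 ≤ k + 1)

lemma rpow_alpha_le_two_mul {k : ℕ} (hk : 2 ≤ k) :
    47 / 25 * ((k : ℝ) + 1) ^ α ≤ ((2 * k : ℕ) + 1 : ℝ) ^ α := by
  have hk' : (2 : ℝ) ≤ k := by exact_mod_cast hk
  calc 47 / 25 * ((k : ℝ) + 1) ^ α ≤ (5 / 3 : ℝ) ^ α * ((k : ℝ) + 1) ^ α := by
        gcongr
        exact le_rpow_alpha (by norm_num) (by norm_num) (by norm_num)
    _ = (5 / 3 * ((k : ℝ) + 1)) ^ α := (Real.mul_rpow (by norm_num) (by positivity)).symm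
    _ ≤ ((2 * k : ℕ) + 1 : ℝ) ^ α := by
        gcongr
        · exact alpha_pos.le
        · push_cast; linarith

def KapBound (a b N : ℝ) : Prop :=
  a + (√2 - 1) * b ≤ N ∧ a ≤ (2 + √2) / 4 * (N + 1) ∧ a + b ≤ (1 + √2) / 2 * (N + 1)

namespace KapBound

variable {a b N P : ℝ}

lemma mono (h : KapBound a b N) (hNP : N ≤ P) : KapBound a b P := by
  obtain ⟨h1, h2, h3⟩ := h
  have hs := Real.sqrt_nonneg 2
  refine ⟨h1.trans hNP, h2.trans ?_, h3.trans ?_⟩ <;> gcongr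

lemma odd (h : KapBound a b N) : KapBound (2 * a + b) a ((1 + √2) * N) := by
  obtain ⟨h1, h2, h3⟩ := h
  have hs2 : √2 * √2 = 2 := Real.mul_self_sqrt zero_le_two
  obtain ⟨hsl, hsu⟩ := sqrt_two_bounds
  have hsb : √2 * √2 * b = 2 * b := by rw [hs2]
  have hsN : √2 * √2 * N = 2 * N := by rw [hs2]
  refine ⟨?_, ?_, ?_⟩
  · linear_combination (1 + √2) * h1 - b * hs2
  · linarith [mul_le_mul_of_nonneg_left h1 (show (0:ℝ) ≤ (2 + √2) / 2 by linarith),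
      mul_le_mul_of_nonneg_left h3 (show (0:ℝ) ≤ (2 - √2) / 2 by linarith)]
  · linarith [mul_le_mul_of_nonneg_left h1 (show (0:ℝ) ≤ 1 + √2 by linarith),
      mul_le_mul_of_nonneg_left h2 (show (0:ℝ) ≤ 2 - √2 by linarith)]

lemma even (hN : (1 + √2) ^ 2 ≤ N) (h : KapBound a b N) : KapBound (a + b) a (47 / 25 * N) := by
  obtain ⟨h1, h2, h3⟩ := h
  have hs2 : √2 * √2 = 2 := Real.mul_self_sqrt zero_le_two
  obtain ⟨hsl, hsu⟩ := sqrt_two_bounds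
  have hsb : √2 * √2 * b = 2 * b := by rw [hs2]
  have hsN : √2 * √2 * N = 2 * N := by rw [hs2]
  have hN0 : 0 ≤ N := le_trans (by positivity) hN
  have hN' : 5.8 ≤ N := by nlinarith
  refine ⟨?_, ?_, ?_⟩
  · linarith [mul_le_mul_of_nonneg_left h1 (show (0:ℝ) ≤ √2 / 2 by linarith),
      mul_le_mul_of_nonneg_left h3 (show (0:ℝ) ≤ √2 / 2 by linarith),
      mul_le_mul_of_nonneg_right hsu hN0]
  · linarith [mul_le_mul_of_nonneg_right hsu hN0, mul_le_mul_of_nonneg_right hsl hN0]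
  · linarith [mul_le_mul_of_nonneg_left h1 (show (0:ℝ) ≤ (2 + √2) / 2 by linarith),
      mul_le_mul_of_nonneg_left h3 (show (0:ℝ) ≤ (2 - √2) / 2 by linarith),
      mul_le_mul_of_nonneg_right hsl hN0]

end KapBound

lemma kapBound_one_zero : KapBound 1 0 1 := by
  have hs := Real.sqrt_nonneg 2
  exact ⟨by norm_num, by linarith, by linarith⟩

lemma kapBound_three_two : KapBound 3 2 3.9 := by
  obtain ⟨hsl, hsu⟩ := sqrt_two_bounds
  exact ⟨by linarith, by linarith, by linarith⟩

lemma kapBound_five_three : KapBound 5 3 6.3 := by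
  obtain ⟨hsl, hsu⟩ := sqrt_two_bounds
  exact ⟨by linarith, by linarith, by linarith⟩

theorem kapBound (n : ℕ) : KapBound (kap 2 n) (kapB 2 n) (((n : ℝ) + 1) ^ α) := by
  induction n using Nat.strong_induction_on with
  | _ n ih =>
  obtain ⟨k, rfl | rfl⟩ := Nat.even_or_odd' n
  · rcases (by omega : k = 0 ∨ k = 1 ∨ k = 2 ∨ 3 ≤ k) with rfl | rfl | rfl | hk
    · have : kap 2 0 = 1 ∧ kapB 2 0 = 0 := by decide
      simpa [this] using kapBound_one_zero
    · have : kap 2 2 = 3 ∧ kapB 2 2 = 2 := by decide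
      norm_num [this]
      exact kapBound_three_two.mono <| le_rpow_alpha (by norm_num) (by norm_num) (by norm_num)
    · have : kap 2 4 = 5 ∧ kapB 2 4 = 3 := by decide
      norm_num [this]
      exact kapBound_five_three.mono <| le_rpow_alpha (by norm_num) (by norm_num) (by norm_num)
    · have h := ((ih k (by omega)).even (add_one_rpow_alpha_of_three_le hk)).mono
        (rpow_alpha_le_two_mul (by omega))
      rw [show 2 * k = 0 + 2 * k by ring, kap_add_mul one_lt_two two_pos (by omega),
        kapB_add_mul one_lt_two two_pos (by omega)]
      push_cast at h ⊢
      simpa using h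
  · have h := (ih k (by omega)).odd
    rw [← two_mul_rpow_alpha (by positivity)] at h
    rw [show 2 * k + 1 = 1 + 2 * k by ring, kap_add_mul one_lt_two one_lt_two (by omega),
      kapB_add_mul one_lt_two one_lt_two (by omega)]
    push_cast at h ⊢
    convert h using 2
    ring

lemma kap_div_rpow_le {n : ℕ} (hn : 1 ≤ n) :
    (kap 2 n : ℝ) / (n : ℝ) ^ α ≤ (2 + √2) / 4 * ((1 + 1 / (n : ℝ)) ^ α + ((n : ℝ) ^ α)⁻¹) := by
  have hn' : (0 : ℝ) < n := by exact_mod_cast hn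
  have hpos : 0 < (n : ℝ) ^ α := Real.rpow_pos_of_pos hn' _
  rw [div_le_iff₀ hpos]
  calc (kap 2 n : ℝ) ≤ (2 + √2) / 4 * (((n : ℝ) + 1) ^ α + 1) := (kapBound n).2.1
    _ = _ := by
      rw [show (n : ℝ) + 1 = (1 + 1 / n) * n by field_simp, Real.mul_rpow (by positivity) hn'.le]
      field_simp

lemma tendsto_kap_majorant :
    Tendsto (fun n : ℕ => (2 + √2) / 4 * ((1 + 1 / (n : ℝ)) ^ α + ((n : ℝ) ^ α)⁻¹)) atTop
      (𝓝 ((2 + √2) / 4)) := by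
  have h1 : Tendsto (fun n : ℕ => (1 + 1 / (n : ℝ)) ^ α) atTop (𝓝 1) := by
    simpa using ((tendsto_const_nhds.add tendsto_one_div_atTop_nhds_zero_nat).rpow_const
      (Or.inr alpha_pos.le) : Tendsto (fun n : ℕ => (1 + 1 / (n : ℝ)) ^ α) atTop (𝓝 ((1 + 0) ^ α)))
  have h2 : Tendsto (fun n : ℕ => ((n : ℝ) ^ α)⁻¹) atTop (𝓝 0) :=
    tendsto_inv_atTop_zero.comp ((tendsto_rpow_atTop alpha_pos).comp tendsto_natCast_atTop_atTop)
  simpa using tendsto_const_nhds.mul (h1.add h2)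

lemma kap_add_mul_kapB_two_pow_sub_one (m : ℕ) :
    (kap 2 (2 ^ m - 1) : ℝ) + (√2 - 1) * kapB 2 (2 ^ m - 1) = (1 + √2) ^ m := by
  induction m with
  | zero =>
    have : kap 2 0 = 1 ∧ kapB 2 0 = 0 := by decide
    simp [this]
  | succ m ih =>
    rw [two_pow_succ_sub_one, kap_add_mul one_lt_two one_lt_two (by omega),
      kapB_add_mul one_lt_two one_lt_two (by omega)]
    push_cast
    linear_combination (1 + √2) * ih - (kapB 2 (2 ^ m - 1) : ℝ) * Real.sq_sqrt zero_le_two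

lemma kap_two_pow_sub_one_ge (m : ℕ) :
    (2 + √2) / 4 * (1 + √2) ^ m - √2 / 4 ≤ kap 2 (2 ^ m - 1) := by
  have hs2 : √2 ^ 2 = 2 := Real.sq_sqrt zero_le_two
  have hs1 : 0 ≤ √2 - 1 := by linarith [sqrt_two_bounds.1]
  cases m with
  | zero =>
    have : kap 2 0 = 1 := by decide
    simp only [pow_zero, Nat.sub_self, this]
    push_cast
    linarith
  | succ m =>
    have hL := kap_add_mul_kapB_two_pow_sub_one m
    have hup := (kapBound (2 ^ m - 1)).2.1
    rw [cast_two_pow_sub_one_add_one, two_pow_rpow_alpha] at hup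
    rw [two_pow_succ_sub_one, kap_add_mul one_lt_two one_lt_two (by omega)]
    push_cast
    -- `2 a + b = (1 + √2) (a + (√2 - 1) b) - (√2 - 1) a`
    linear_combination mul_le_mul_of_nonneg_left hup hs1 - (1 + √2) * hL
      + (kapB 2 (2 ^ m - 1) + (1 + √2) ^ m / 2 + 1 / 4 : ℝ) * hs2

lemma tendsto_kap_div_rpow_two_pow_sub_one :
    Tendsto (fun m : ℕ => (kap 2 (2 ^ m - 1) : ℝ) / ((2 ^ m - 1 : ℕ) : ℝ) ^ α) atTop
      (𝓝 ((2 + √2) / 4)) := by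
  have hr : 1 < 1 + √2 := by linarith [sqrt_two_bounds.1]
  have hlow : Tendsto (fun m : ℕ => (2 + √2) / 4 - √2 / 4 / (1 + √2) ^ m) atTop
      (𝓝 ((2 + √2) / 4)) := by
    simpa using tendsto_const_nhds.sub
      (tendsto_const_nhds.div_atTop (tendsto_pow_atTop_atTop_of_one_lt hr))
  refine tendsto_of_tendsto_of_tendsto_of_le_of_le' hlow
    (tendsto_kap_majorant.comp tendsto_two_pow_sub_one) ?_ ?_
  · filter_upwards [eventually_ge_atTop 1] with m hm
    have hpos : (0 : ℝ) < ((2 ^ m - 1 : ℕ) : ℝ) ^ α := by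
      have : 1 ≤ 2 ^ m - 1 := by have := Nat.pow_le_pow_right two_pos hm; omega
      positivity
    have hden : ((2 ^ m - 1 : ℕ) : ℝ) ^ α ≤ (1 + √2) ^ m := by
      rw [← two_pow_rpow_alpha]
      gcongr
      · exact alpha_pos.le
      · linarith [cast_two_pow_sub_one_add_one m]
    have ha : (0 : ℝ) ≤ kap 2 (2 ^ m - 1) := by exact_mod_cast (kap_pos 2 _).le
    calc (2 + √2) / 4 - √2 / 4 / (1 + √2) ^ m
        = ((2 + √2) / 4 * (1 + √2) ^ m - √2 / 4) / (1 + √2) ^ m := by field_simp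
      _ ≤ (kap 2 (2 ^ m - 1) : ℝ) / (1 + √2) ^ m := by
        gcongr; exact kap_two_pow_sub_one_ge m
      _ ≤ _ := div_le_div_of_nonneg_left ha hpos hden
  · filter_upwards [eventually_ge_atTop 1] with m hm
    exact kap_div_rpow_le (by have := Nat.pow_le_pow_right two_pos hm; omega)

open Filter in
/-- `limsup_{n→∞} κ₂(n)/n^{log₂(1+√2)} = (2+√2)/4`. -/
theorem stmt10 :
    limsup (fun n : ℕ => (kap 2 n : ℝ) / (n : ℝ) ^ Real.logb 2 (1 + Real.sqrt 2)) atTop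
      = (2 + Real.sqrt 2) / 4 := by
  refine limsup_eq_of_eventually_le_of_tendsto_comp ?_ ?_ tendsto_kap_majorant
    tendsto_two_pow_sub_one tendsto_kap_div_rpow_two_pow_sub_one
  · refine isCoboundedUnder_le_of_le atTop (x := 0) fun n => div_nonneg ?_ (by positivity)
    exact_mod_cast (kap_pos 2 n).le
  · filter_upwards [eventually_ge_atTop 1] with n hn using kap_div_rpow_le hn
end

section
/- There exist positive constants c₁, c₂ (depending on k) such that for all sufficiently large N, c₁·N^{log_k α_k} ≤ Σ_{n≤N} κ(n) ≤ c₂·N^{log_k α_k}, where α_k = (k(k+1) + k√((k+1)²+16))/4. -/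
open Matrix

/-- product matrix -/
def P (k n : ℕ) : Matrix (Fin 2) (Fin 2) ℤ :=
  (Nat.digits k n).foldr (fun i M => A i * M) 1

lemma P_zero (k : ℕ) : P k 0 = 1 := by simp [P]

lemma P_step {k n : ℕ} (hk : 2 ≤ k) (hn : n ≠ 0) :
    P k n = A (n % k) * P k (n / k) := by
  rw [P, Nat.digits_def' (by omega : 1 < k) (Nat.pos_of_ne_zero hn), List.foldr_cons]
  rfl

lemma A_mul_00 (j : ℕ) (M : Matrix (Fin 2) (Fin 2) ℤ) :
    (A j * M) 0 0 = (j + 1) * M 0 0 + M 1 0 := by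
  simp [A, Matrix.mul_apply, Fin.sum_univ_two]

lemma A_mul_10 (j : ℕ) (M : Matrix (Fin 2) (Fin 2) ℤ) :
    (A j * M) 1 0 = M 0 0 := by
  simp [A, Matrix.mul_apply, Fin.sum_univ_two]

lemma f0_rec {k : ℕ} (hk : 2 ≤ k) (q j : ℕ) (hj : j < k) :
    P k (k * q + j) 0 0 = (j + 1) * P k q 0 0 + P k q 1 0 := by
  rcases Nat.eq_zero_or_pos (k * q + j) with h | h
  · have hq : q = 0 := by
      rcases Nat.eq_zero_or_pos q with h' | h'
      · exact h'
      · exfalso; nlinarith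
    have hj0 : j = 0 := by omega
    subst hq; subst hj0; simp [P_zero, Matrix.one_apply]
  · rw [P_step hk (by omega)]
    have h1 : (k * q + j) % k = j := by
      rw [Nat.mul_add_mod, Nat.mod_eq_of_lt hj]
    have h2 : (k * q + j) / k = q := by
      rw [Nat.mul_add_div (by omega), Nat.div_eq_of_lt hj, add_zero]
    rw [h1, h2, A_mul_00]

lemma f1_rec {k : ℕ} (hk : 2 ≤ k) (q j : ℕ) (hj : j < k) (h : k * q + j ≠ 0) :
    P k (k * q + j) 1 0 = P k q 0 0 := by
  rw [P_step hk h]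
  have h1 : (k * q + j) % k = j := by
    rw [Nat.mul_add_mod, Nat.mod_eq_of_lt hj]
  have h2 : (k * q + j) / k = q := by
    rw [Nat.mul_add_div (by omega), Nat.div_eq_of_lt hj, add_zero]
  rw [h1, h2, A_mul_10]

lemma P_pos {k : ℕ} (hk : 2 ≤ k) : ∀ n, 1 ≤ P k n 0 0 ∧ 0 ≤ P k n 1 0 := by
  intro n
  induction n using Nat.strong_induction_on with
  | _ n ih =>
    rcases Nat.eq_zero_or_pos n with h | h
    · subst h; simp [P_zero, Matrix.one_apply]
    · have hd : n / k < n := Nat.div_lt_self h (by omega)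
      have hrec := ih (n / k) hd
      have hn : n = k * (n / k) + n % k := (Nat.div_add_mod n k).symm
      constructor
      · rw [hn, f0_rec hk _ _ (Nat.mod_lt _ (by omega))]
        nlinarith [hrec.1, hrec.2, Int.natCast_nonneg (n % k)]
      · rw [hn, f1_rec hk _ _ (Nat.mod_lt _ (by omega)) (by rw [← hn]; omega)]
        linarith [hrec.1]

lemma sum_split {k : ℕ} (g : ℕ → ℤ) (M : ℕ) :
    ∑ n ∈ Finset.range (k * M), g n
      = ∑ q ∈ Finset.range M, ∑ j ∈ Finset.range k, g (k * q + j) := by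
  induction M with
  | zero => simp
  | succ M ih =>
      rw [Nat.mul_succ, Finset.sum_range_add, ih, Finset.sum_range_succ]

def s0 (k m : ℕ) : ℤ := ∑ n ∈ Finset.range (k ^ m), P k n 0 0
def s1 (k m : ℕ) : ℤ := ∑ n ∈ Finset.range (k ^ m), P k n 1 0
def sig (k : ℕ) : ℤ := ∑ j ∈ Finset.range k, ((j : ℤ) + 1)

lemma s0_rec {k : ℕ} (hk : 2 ≤ k) (m : ℕ) :
    s0 k (m + 1) = sig k * s0 k m + k * s1 k m := by
  rw [s0, pow_succ', sum_split]
  rw [Finset.sum_congr rfl (fun q _ => by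
    rw [Finset.sum_congr rfl (fun j hj => f0_rec hk q j (Finset.mem_range.mp hj)),
      Finset.sum_add_distrib, ← Finset.sum_mul, Finset.sum_const, Finset.card_range,
      nsmul_eq_mul]
    rfl : ∀ q ∈ Finset.range (k ^ m), ∑ j ∈ Finset.range k, P k (k*q+j) 0 0
      = sig k * P k q 0 0 + (k : ℤ) * P k q 1 0)]
  rw [Finset.sum_add_distrib, ← Finset.mul_sum, ← Finset.mul_sum]
  rfl

lemma row_sum_10 {k : ℕ} (hk : 2 ≤ k) (q : ℕ) :
    ∑ j ∈ Finset.range k, P k (k * q + j) 1 0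
      = k * P k q 0 0 - (if q = 0 then 1 else 0) := by
  rcases eq_or_ne q 0 with rfl | hq
  · obtain ⟨k', rfl⟩ : ∃ k', k = k' + 1 := ⟨k - 1, by omega⟩
    simp only [mul_zero, zero_add, if_pos rfl, P_zero, Matrix.one_apply_eq]
    rw [Finset.sum_range_succ']
    have h0 : P (k' + 1) 0 1 0 = 0 := by simp [P_zero, Matrix.one_apply]
    rw [Finset.sum_congr rfl (fun i hi => by
      have hi' := Finset.mem_range.mp hi
      have := f1_rec hk 0 (i + 1) (by omega) (by omega)
      simpa using this : ∀ i ∈ Finset.range k', P (k' + 1) (i + 1) 1 0 = P (k' + 1) 0 0 0)]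
    simp [P_zero, Matrix.one_apply]
  · rw [Finset.sum_congr rfl (fun j hj =>
      f1_rec hk q j (Finset.mem_range.mp hj) (by positivity)),
      Finset.sum_const, Finset.card_range, nsmul_eq_mul, if_neg hq, sub_zero]

lemma s1_rec {k : ℕ} (hk : 2 ≤ k) (m : ℕ) :
    s1 k (m + 1) = k * s0 k m - 1 := by
  rw [s1, pow_succ', sum_split, Finset.sum_congr rfl (fun q _ => row_sum_10 hk q),
    Finset.sum_sub_distrib, ← Finset.mul_sum]
  congr 1
  simp [Finset.sum_ite_eq', Finset.mem_range, pow_pos (by omega : 0 < k)]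

lemma s0_zero (k : ℕ) : s0 k 0 = 1 := by simp [s0, P_zero, Matrix.one_apply]
lemma s1_zero (k : ℕ) : s1 k 0 = 0 := by simp [s1, P_zero, Matrix.one_apply]

lemma s0_one {k : ℕ} (hk : 2 ≤ k) : s0 k 1 = sig k := by
  rw [← pow_one k] at *
  rw [show (1:ℕ) = 0 + 1 by rfl, s0_rec hk, s0_zero, s1_zero]
  ring

lemma s0_rec2 {k : ℕ} (hk : 2 ≤ k) (m : ℕ) :
    s0 k (m + 2) = sig k * s0 k (m + 1) + k ^ 2 * s0 k m - k := by
  rw [show m + 2 = (m + 1) + 1 by rfl, s0_rec hk, s1_rec hk]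
  ring

lemma sig_val (k : ℕ) : 2 * sig k = k * (k + 1) := by
  induction k with
  | zero => simp [sig]
  | succ n ih =>
      rw [sig, Finset.sum_range_succ, ← sig] at *
      push_cast
      linarith

section RealBounds

variable {k : ℕ} (hk : 2 ≤ k)

noncomputable def alp (k : ℕ) : ℝ :=
  ((k : ℝ) * (k + 1) + k * Real.sqrt (((k : ℝ) + 1) ^ 2 + 16)) / 4

lemma sqrtD_sq (k : ℕ) :
    (Real.sqrt (((k : ℝ) + 1) ^ 2 + 16)) ^ 2 = ((k : ℝ) + 1) ^ 2 + 16 :=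
  Real.sq_sqrt (by positivity)

include hk

omit hk in
lemma sig_real : (sig k : ℝ) = (k : ℝ) * (k + 1) / 2 := by
  have := sig_val k
  have h2 : (2:ℝ) * (sig k : ℝ) = (k:ℝ) * ((k:ℝ) + 1) := by exact_mod_cast this
  linarith

lemma alp_sq : (alp k) ^ 2 = ((k : ℝ) * (k + 1) / 2) * alp k + (k : ℝ) ^ 2 := by
  have h := sqrtD_sq k
  have hk0 : (0:ℝ) ≤ k := by positivity
  rw [alp]
  nlinarith [h, hk0]

lemma sig_le_alp : (k : ℝ) * (k + 1) / 2 ≤ alp k := by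
  have h1 : (k : ℝ) + 1 ≤ Real.sqrt (((k : ℝ) + 1) ^ 2 + 16) :=
    Real.le_sqrt_of_sq_le (by nlinarith)
  have hk0 : (0:ℝ) ≤ k := by positivity
  rw [alp]
  nlinarith

lemma alp_le_two_sig : alp k ≤ (k : ℝ) * (k + 1) := by
  have hk2 : (2:ℝ) ≤ k := by exact_mod_cast hk
  have h1 : Real.sqrt (((k : ℝ) + 1) ^ 2 + 16) ≤ 3 * ((k:ℝ) + 1) := by
    rw [Real.sqrt_le_left (by positivity)]
    nlinarith
  rw [alp]
  nlinarith

lemma sig_ge_three : (3:ℝ) ≤ (k : ℝ) * (k + 1) / 2 := by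
  have hk2 : (2:ℝ) ≤ k := by exact_mod_cast hk
  nlinarith

lemma alp_ge_three : (3:ℝ) ≤ alp k := le_trans (sig_ge_three hk) (sig_le_alp hk)

lemma s0_ub : ∀ m : ℕ, (s0 k m : ℝ) ≤ alp k ^ m := by
  have hα := alp_sq hk
  have hα3 := alp_ge_three hk
  intro m
  induction m using Nat.strong_induction_on with
  | _ m ih =>
    match m with
    | 0 => simp [s0_zero]
    | 1 =>
        rw [s0_one hk, sig_real, pow_one]
        exact sig_le_alp hk
    | (m + 2) =>
        have h1 := ih (m + 1) (by omega)
        have h0 := ih m (by omega)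
        have hrec := s0_rec2 hk m
        have hcast : (s0 k (m+2) : ℝ)
            = (sig k : ℝ) * (s0 k (m+1) : ℝ) + (k:ℝ)^2 * (s0 k m : ℝ) - k := by
          exact_mod_cast congrArg (fun z : ℤ => (z : ℝ)) hrec
        rw [hcast, sig_real]
        have hσ0 : (0:ℝ) ≤ (k : ℝ) * (k + 1) / 2 := by positivity
        have hk0 : (0:ℝ) ≤ (k:ℝ) := by positivity
        have hpm : (0:ℝ) ≤ alp k ^ m := by positivity
        have hEq : alp k ^ (m + 2) = ((k : ℝ) * (k + 1) / 2) * alp k ^ (m+1) + (k:ℝ)^2 * alp k ^ m := by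
          have : alp k ^ (m + 2) = alp k ^ 2 * alp k ^ m := by ring
          rw [this, hα]; ring
        rw [hEq]
        nlinarith [pow_nonneg (le_trans (by norm_num) hα3) (m+1)]

lemma s0_lb : ∀ m : ℕ, alp k ^ m / 3 + 1/2 ≤ (s0 k m : ℝ) := by
  have hα := alp_sq hk
  have hα3 := alp_ge_three hk
  have hk2 : (2:ℝ) ≤ k := by exact_mod_cast hk
  intro m
  induction m using Nat.strong_induction_on with
  | _ m ih =>
    match m with
    | 0 => norm_num [s0_zero]
    | 1 =>
        rw [s0_one hk, sig_real, pow_one]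
        have h2 := alp_le_two_sig hk
        nlinarith
    | (m + 2) =>
        have h1 := ih (m + 1) (by omega)
        have h0 := ih m (by omega)
        have hrec := s0_rec2 hk m
        have hcast : (s0 k (m+2) : ℝ)
            = (sig k : ℝ) * (s0 k (m+1) : ℝ) + (k:ℝ)^2 * (s0 k m : ℝ) - k := by
          exact_mod_cast congrArg (fun z : ℤ => (z : ℝ)) hrec
        rw [hcast, sig_real]
        have hEq : alp k ^ (m + 2) = ((k : ℝ) * (k + 1) / 2) * alp k ^ (m+1) + (k:ℝ)^2 * alp k ^ m := by
          have : alp k ^ (m + 2) = alp k ^ 2 * alp k ^ m := by ring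
          rw [this, hα]; ring
        rw [hEq]
        have hσ0 : (3:ℝ) ≤ (k : ℝ) * (k + 1) / 2 := sig_ge_three hk
        nlinarith

end RealBounds


open Filter in
/-- There are positive constants `c₁, c₂` (depending on `k`) such that for all
sufficiently large `N`, `c₁·N^{log_k α_k} ≤ Σ_{n≤N} κ(n) ≤ c₂·N^{log_k α_k}`,
where `α_k = (k(k+1) + k√((k+1)²+16))/4`. -/
theorem stmt11 (k : ℕ) (hk : 2 ≤ k) :
    letI α : ℝ := ((k : ℝ) * (k + 1) + k * Real.sqrt (((k : ℝ) + 1) ^ 2 + 16)) / 4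
    ∃ c₁ c₂ : ℝ, 0 < c₁ ∧ 0 < c₂ ∧
      ∀ᶠ N : ℕ in atTop,
        c₁ * (N : ℝ) ^ Real.logb k α ≤ ∑ n ∈ Finset.range (N + 1), (kap k n : ℝ) ∧
        ∑ n ∈ Finset.range (N + 1), (kap k n : ℝ) ≤ c₂ * (N : ℝ) ^ Real.logb k α := by
  rw [show ((k : ℝ) * ((k:ℝ) + 1) + (k:ℝ) * Real.sqrt (((k : ℝ) + 1) ^ 2 + 16)) / 4 = alp k
    from rfl]
  set α : ℝ := alp k with hαdef
  have hα3 : (3:ℝ) ≤ α := alp_ge_three hk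
  have hα0 : (0:ℝ) < α := by linarith
  have hα1 : (1:ℝ) < α := by linarith
  refine ⟨1 / (3 * α), α, by positivity, hα0, ?_⟩
  rw [eventually_atTop]
  refine ⟨1, fun N hN => ?_⟩
  set L : ℝ := Real.logb k α with hL
  have hk1 : (1:ℝ) < (k:ℝ) := by exact_mod_cast (by omega : 1 < k)
  have hk0 : (0:ℝ) < (k:ℝ) := by linarith
  have hkL : (k:ℝ) ^ L = α := Real.rpow_logb hk0 (by linarith) hα0
  have hL0 : 0 ≤ L := Real.logb_nonneg hk1 (by linarith)
  set m : ℕ := Nat.log k N with hm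
  have hmlb : k ^ m ≤ N := Nat.pow_log_le_self k (by omega)
  have hmub : N < k ^ (m + 1) := Nat.lt_pow_succ_log_self (by omega) N
  -- sums
  have hsum_eq : ∀ M : ℕ, (s0 k M : ℝ) = ∑ n ∈ Finset.range (k ^ M), (kap k n : ℝ) := by
    intro M
    rw [s0]
    push_cast
    rfl
  have hnonneg : ∀ n : ℕ, (0:ℝ) ≤ (kap k n : ℝ) := by
    intro n
    have := (P_pos hk n).1
    have : (1:ℝ) ≤ (P k n 0 0 : ℝ) := by exact_mod_cast this
    have hkap : kap k n = P k n 0 0 := rfl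
    rw [hkap]; linarith
  have hS_lb : (s0 k m : ℝ) ≤ ∑ n ∈ Finset.range (N + 1), (kap k n : ℝ) := by
    rw [hsum_eq]
    exact Finset.sum_le_sum_of_subset_of_nonneg
      (Finset.range_subset_range.mpr (by omega)) (fun i _ _ => hnonneg i)
  have hS_ub : ∑ n ∈ Finset.range (N + 1), (kap k n : ℝ) ≤ (s0 k (m + 1) : ℝ) := by
    rw [hsum_eq]
    exact Finset.sum_le_sum_of_subset_of_nonneg
      (Finset.range_subset_range.mpr (by omega)) (fun i _ _ => hnonneg i)
  -- rpow comparisons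
  have hpowL : ∀ M : ℕ, ((k:ℝ) ^ M) ^ L = α ^ M := by
    intro M
    rw [← Real.rpow_natCast (k:ℝ) M, ← Real.rpow_mul (le_of_lt hk0), mul_comm,
      Real.rpow_mul (le_of_lt hk0), hkL, Real.rpow_natCast]
  have hN0 : (0:ℝ) ≤ (N:ℝ) := by positivity
  have hNL_ub : (N:ℝ) ^ L ≤ α ^ (m + 1) := by
    rw [← hpowL (m + 1)]
    refine Real.rpow_le_rpow hN0 ?_ hL0
    exact_mod_cast le_of_lt hmub
  have hNL_lb : α ^ m ≤ (N:ℝ) ^ L := by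
    rw [← hpowL m]
    refine Real.rpow_le_rpow (by positivity) ?_ hL0
    exact_mod_cast hmlb
  have hlow : α ^ m / 3 + 1/2 ≤ (s0 k m : ℝ) := s0_lb hk m
  have hhigh : (s0 k (m+1) : ℝ) ≤ α ^ (m+1) := s0_ub hk (m + 1)
  constructor
  · have h1 : 1 / (3 * α) * (N:ℝ) ^ L ≤ α ^ m / 3 := by
      have h2 : 1 / (3 * α) * (N:ℝ) ^ L ≤ 1 / (3 * α) * α ^ (m+1) :=
        mul_le_mul_of_nonneg_left hNL_ub (by positivity)
      have heq : 1 / (3 * α) * α ^ (m+1) = α ^ m / 3 := by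
        field_simp
        ring
      linarith
    linarith
  · calc ∑ n ∈ Finset.range (N + 1), (kap k n : ℝ) ≤ (s0 k (m+1) : ℝ) := hS_ub
      _ ≤ α ^ (m + 1) := hhigh
      _ = α * α ^ m := by ring
      _ ≤ α * (N:ℝ) ^ L := by nlinarith
end
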